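/- Let H be a self-adjoint operator and A a hermitian (symmetric) densely defined operator on a Hilbert space ℋ. Assume e^{-itH} leaves D(A) ∩ D(H) invariant for all t ∈ ℝ, and for any ψ₀ ∈ D(A) ∩ D(H) the norm ‖A e^{-itH} ψ₀‖ is bounded uniformly for t in bounded intervals. Then for ψ₀ ∈ D(A) ∩ D(H), the function t ↦ ⟨ψ(t), A ψ(t)⟩ with ψ(t) = e^{-itH}ψ₀ is continuously differentiable and satisfies d/dt ⟨ψ(t), A ψ(t)⟩ = i(⟨Hψ(t), Aψ(t)⟩ − ⟨Aψ(t), Hψ(t)⟩). -/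

import Mathlib

/-!
Write `ψ t = U t ψ₀`. Symmetry of `A` gives
`⟪ψ s, A ψ s⟫ - ⟪ψ t, A ψ t⟫ = ⟪A ψ s, ψ s - ψ t⟫ + ⟪ψ s - ψ t, A ψ t⟫`,
so only the strong derivative of `ψ` enters, provided `A ψ s → A ψ t` weakly and stays bounded.
Boundedness is (H3); weak continuity follows since `⟪A ψ s, φ⟫ = ⟪ψ s, A φ⟫` is continuous
for `φ` in the dense domain, and a locally bounded family of functionals converging on a dense
set converges everywhere. The same density argument makes `U` strongly continuous, so
`H ψ t = U t (H ψ₀)` is norm-continuous, which gives the continuity of the derivative.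
-/

open Filter Topology

local notation "⟪" x ", " y "⟫" => @inner ℂ _ _ x y

section Dense

variable {𝕜 𝕜₂ E F : Type*} [NontriviallyNormedField 𝕜] [NontriviallyNormedField 𝕜₂]
  {σ₁₂ : 𝕜 →+* 𝕜₂} [RingHomIsometric σ₁₂] [SeminormedAddCommGroup E] [SeminormedAddCommGroup F]
  [NormedSpace 𝕜 E] [NormedSpace 𝕜₂ F]

theorem tendsto_apply_of_dense {ι : Type*} {l : Filter ι} {T : ι → E →SL[σ₁₂] F}
    {T₀ : E →SL[σ₁₂] F} (hbdd : IsBoundedUnder (· ≤ ·) l fun i => ‖T i‖) {D : Set E}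
    (hD : Dense D) (hT : ∀ x ∈ D, Tendsto (fun i => T i x) l (𝓝 (T₀ x))) (x : E) :
    Tendsto (fun i => T i x) l (𝓝 (T₀ x)) := by
  obtain ⟨C, hC⟩ := hbdd
  -- on the indices where the bound holds the family is equicontinuous
  set S := {i | ‖T i‖ ≤ C}
  have hl : map ((↑) : S → ι) (comap (↑) l) = l :=
    map_comap_of_mem (by rw [Subtype.range_coe]; exact hC)
  have hS : ∃ C, ∀ i : S, ‖T i‖ ≤ C := ⟨C, fun i => i.2⟩
  have hequi : Equicontinuous ((↑) ∘ fun i : S => T i) :=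
    ((NormedSpace.equicontinuous_TFAE fun i : S => T i).out 5 1).1 hS
  have hclosed := hequi.isClosed_setOfPred_tendsto (l := comap (↑) l) T₀.continuous
  have hDS : D ⊆ {y | Tendsto (fun i : S => T i y) (comap (↑) l) (𝓝 (T₀ y))} :=
    fun y hy => (hT y hy).comp tendsto_comap
  rw [← hl, tendsto_map'_iff]
  exact closure_minimal hDS hclosed (hD.closure_eq.symm ▸ Set.mem_univ x)

theorem continuous_apply_of_dense {X : Type*} [TopologicalSpace X] {T : X → E →SL[σ₁₂] F}
    {C : ℝ} (hbdd : ∀ t, ‖T t‖ ≤ C) {D : Set E} (hD : Dense D)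
    (hT : ∀ x ∈ D, Continuous fun t => T t x) (x : E) : Continuous fun t => T t x :=
  continuous_iff_continuousAt.2 fun t =>
    tendsto_apply_of_dense (isBoundedUnder_of ⟨C, hbdd⟩) hD (fun y hy => (hT y hy).tendsto t) x

end Dense

theorem eq_apply_of_hasDerivAt_orbit {𝕜 E : Type*} [NontriviallyNormedField 𝕜]
    [NormedAlgebra ℝ 𝕜] [NormedAddCommGroup E] [NormedSpace 𝕜 E] [NormedSpace ℝ E] [IsScalarTower ℝ 𝕜 E]
    {U : ℝ → E →L[𝕜] E} (hU : ∀ s t, U (s + t) = (U s).comp (U t)) {ψ v w : E} {t : ℝ}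
    (hv : HasDerivAt (fun s => U s ψ) v 0) (hw : HasDerivAt (fun s => U s ψ) w t) :
    w = U t v := by
  have hshift : HasDerivAt (fun h => U (h + t) ψ) w 0 :=
    HasDerivAt.comp_add_const 0 t (f := fun s => U s ψ) (by rwa [zero_add])
  have hcomp : HasDerivAt (fun h => U t (U h ψ)) (U t v) 0 :=
    ((U t).restrictScalars ℝ).hasFDerivAt.comp_hasDerivAt 0 hv
  refine hshift.unique (hcomp.congr_of_eventuallyEq (Eventually.of_forall fun h => ?_))
  show U (h + t) ψ = U t (U h ψ)
  rw [add_comm, hU]; rfl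

section Symmetric

variable {E : Type*} [NormedAddCommGroup E] [InnerProductSpace ℂ E]

theorem tendsto_inner_of_weak_tendsto {ι : Type*} {l : Filter ι} {g u : ι → E} {g₀ u₀ : E}
    (hbdd : IsBoundedUnder (· ≤ ·) l fun i => ‖g i‖)
    (hg : ∀ χ, Tendsto (fun i => ⟪g i, χ⟫) l (𝓝 ⟪g₀, χ⟫)) (hu : Tendsto u l (𝓝 u₀)) :
    Tendsto (fun i => ⟪g i, u i⟫) l (𝓝 ⟪g₀, u₀⟫) := by
  obtain ⟨C, hC⟩ := hbdd
  have hsmall : Tendsto (fun i => ⟪g i, u i - u₀⟫) l (𝓝 0) := by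
    refine squeeze_zero_norm' ?_ (by simpa using ((hu.sub_const u₀).norm.const_mul C))
    filter_upwards [eventually_map.1 hC] with i hi
    calc ‖⟪g i, u i - u₀⟫‖ ≤ ‖g i‖ * ‖u i - u₀‖ := norm_inner_le_norm _ _
      _ ≤ C * ‖u i - u₀‖ := by gcongr
  simpa [inner_sub_right] using hsmall.add (hg u₀)

variable {A : E → E} {D : Set E}

theorem tendsto_inner_apply_of_symmetric (hD : Dense D)
    (hA : ∀ φ ∈ D, ∀ ψ ∈ D, ⟪A φ, ψ⟫ = ⟪φ, A ψ⟫) {ι : Type*} {l : Filter ι} {f : ι → E} {x : E}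
    (hfD : ∀ i, f i ∈ D) (hx : x ∈ D) (hf : Tendsto f l (𝓝 x))
    (hbdd : IsBoundedUnder (· ≤ ·) l fun i => ‖A (f i)‖) (χ : E) :
    Tendsto (fun i => ⟪A (f i), χ⟫) l (𝓝 ⟪A x, χ⟫) := by
  refine tendsto_apply_of_dense (T := fun i => innerSL ℂ (A (f i))) (T₀ := innerSL ℂ (A x))
    (by simpa only [innerSL_apply_norm] using hbdd) hD (fun φ hφ => ?_) χ
  simp only [innerSL_apply_apply, hA _ (hfD _) φ hφ, hA x hx φ hφ]
  exact hf.inner tendsto_const_nhds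

theorem hasDerivAt_inner_apply_of_symmetric (hD : Dense D)
    (hA : ∀ φ ∈ D, ∀ ψ ∈ D, ⟪A φ, ψ⟫ = ⟪φ, A ψ⟫) {f : ℝ → E} {f' : E} {t : ℝ} (hfD : ∀ s, f s ∈ D)
    (hf : HasDerivAt f f' t) (hbdd : IsBoundedUnder (· ≤ ·) (𝓝 t) fun s => ‖A (f s)‖) :
    HasDerivAt (fun s => ⟪f s, A (f s)⟫) (⟪A (f t), f'⟫ + ⟪f', A (f t)⟫) t := by
  have hslope := hasDerivAt_iff_tendsto_slope.1 hf
  have hweak := tendsto_inner_apply_of_symmetric hD hA hfD (hfD t) hf.continuousAt hbdd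
  have h₁ : Tendsto (fun s => ⟪A (f s), slope f t s⟫) (𝓝[≠] t) (𝓝 ⟪A (f t), f'⟫) :=
    tendsto_inner_of_weak_tendsto (hbdd.mono nhdsWithin_le_nhds)
      (fun χ => (hweak χ).mono_left nhdsWithin_le_nhds) hslope
  have h₂ : Tendsto (fun s => ⟪slope f t s, A (f t)⟫) (𝓝[≠] t) (𝓝 ⟪f', A (f t)⟫) :=
    hslope.inner tendsto_const_nhds
  rw [hasDerivAt_iff_tendsto_slope]
  refine (h₁.add h₂).congr fun s => ?_
  have hdiff : ⟪f s, A (f s)⟫ - ⟪f t, A (f t)⟫ = ⟪A (f s), f s - f t⟫ + ⟪f s - f t, A (f t)⟫ := by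
    rw [inner_sub_right, inner_sub_left, hA _ (hfD s) _ (hfD s), hA _ (hfD s) _ (hfD t)]
    ring
  rw [slope_def_module, slope_def_module, hdiff, smul_add, inner_smul_left_eq_smul,
    inner_smul_right_eq_smul]

end Symmetric

theorem abstract_ehrenfest_general
    {ℍ : Type*} [NormedAddCommGroup ℍ] [InnerProductSpace ℂ ℍ]
    (DH DA : Set ℍ) (H A : ℍ → ℍ) (U : ℝ → ℍ →L[ℂ] ℍ)
    (hDH : Dense DH) (hDA : Dense DA)
    (hAsym : ∀ φ ∈ DA, ∀ ψ ∈ DA, ⟪A φ, ψ⟫ = ⟪φ, A ψ⟫)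
    (hU0 : U 0 = ContinuousLinearMap.id ℂ ℍ)
    (hUgrp : ∀ s t : ℝ, U (s + t) = (U s).comp (U t))
    (hUunitary : ∀ (t : ℝ) (x : ℍ), ‖U t x‖ = ‖x‖)
    (hgen : ∀ ψ ∈ DH, ∀ t : ℝ,
      HasDerivAt (fun s => U s ψ) (-(Complex.I) • H (U t ψ)) t)
    -- (H2): invariance of `DA ∩ DH` under the propagator
    (hinv : ∀ (t : ℝ), ∀ ψ ∈ DA ∩ DH, U t ψ ∈ DA ∩ DH)
    -- (H3): uniform boundedness of `‖A e^{-itH} ψ₀‖` on bounded time intervals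
    (hbdd : ∀ ψ₀ ∈ DA ∩ DH, ∀ I : Set ℝ, Bornology.IsBounded I →
      ∃ M : ℝ, ∀ t ∈ I, ‖A (U t ψ₀)‖ ≤ M)
    (ψ₀ : ℍ) (hψ₀ : ψ₀ ∈ DA ∩ DH) :
    (∀ t : ℝ, HasDerivAt (fun s => ⟪U s ψ₀, A (U s ψ₀)⟫)
        (Complex.I * (⟪H (U t ψ₀), A (U t ψ₀)⟫ - ⟪A (U t ψ₀), H (U t ψ₀)⟫)) t) ∧
    Continuous (fun t : ℝ =>
        Complex.I * (⟪H (U t ψ₀), A (U t ψ₀)⟫ - ⟪A (U t ψ₀), H (U t ψ₀)⟫)) := by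
  have hψA : ∀ t, U t ψ₀ ∈ DA := fun t => (hinv t ψ₀ hψ₀).1
  have hψ : ∀ t, HasDerivAt (fun s => U s ψ₀) (-(Complex.I) • H (U t ψ₀)) t := hgen ψ₀ hψ₀.2
  have hAbdd (t : ℝ) : IsBoundedUnder (· ≤ ·) (𝓝 t) fun s => ‖A (U s ψ₀)‖ := by
    obtain ⟨M, hM⟩ := hbdd ψ₀ hψ₀ _ (Metric.isBounded_ball (x := t) (r := 1))
    exact ⟨M, eventually_map.2 (eventually_of_mem (Metric.ball_mem_nhds t one_pos) hM)⟩
  have hUcont : ∀ x, Continuous fun t => U t x :=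
    continuous_apply_of_dense (C := 1)
      (fun t => (U t).opNorm_le_bound zero_le_one fun x => by rw [hUunitary, one_mul]) hDH
      fun x hx => continuous_iff_continuousAt.2 fun t => (hgen x hx t).continuousAt
  have hHU (t : ℝ) : H (U t ψ₀) = U t (H ψ₀) := by
    have h := eq_apply_of_hasDerivAt_orbit hUgrp (hψ 0) (hψ t)
    rw [hU0, ContinuousLinearMap.id_apply, map_smul] at h
    exact smul_right_injective ℍ (neg_ne_zero.2 Complex.I_ne_zero) h
  refine ⟨fun t => ?_, ?_⟩
  · convert hasDerivAt_inner_apply_of_symmetric hDA hAsym hψA (hψ t) (hAbdd t) using 1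
    simp only [inner_smul_left, inner_smul_right, map_neg, Complex.conj_I]
    ring
  · have hcont : Continuous fun t => ⟪A (U t ψ₀), H (U t ψ₀)⟫ := by
      refine continuous_iff_continuousAt.2 fun t => tendsto_inner_of_weak_tendsto (hAbdd t)
        (tendsto_inner_apply_of_symmetric hDA hAsym hψA (hψA t) (hψ t).continuousAt (hAbdd t))
        ?_
      simp only [hHU]
      exact (hUcont _).continuousAt
    have hconj : Continuous fun t => ⟪H (U t ψ₀), A (U t ψ₀)⟫ := by
      simpa only [Function.comp_def, inner_conj_symm] using Complex.continuous_conj.comp hcont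
    exact continuous_const.mul (hconj.sub hcont)

/-- **Abstract Ehrenfest theorem.**
`H` is a self-adjoint operator on the complex Hilbert space `ℍ`, encoded (via Stone's
theorem) through the strongly continuous one-parameter unitary group `U t = e^{-itH}`
which it generates, together with its domain `DH` on which it is symmetric, invariant,
and gives the derivative of the group.  `A` is a densely defined hermitean (symmetric)
operator with domain `DA`.  Assume `e^{-itH}` leaves `DA ∩ DH` invariant (H2) and that
`‖A e^{-itH} ψ₀‖` is bounded uniformly for `t` in bounded sets (H3).  Then for
`ψ₀ ∈ DA ∩ DH` the expected value `t ↦ ⟨ψ(t), A ψ(t)⟩`, `ψ(t) = e^{-itH} ψ₀`, is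
continuously differentiable with derivative `i (⟨Hψ(t), Aψ(t)⟩ − ⟨Aψ(t), Hψ(t)⟩)`. -/
theorem abstract_ehrenfest
    {ℍ : Type*} [NormedAddCommGroup ℍ] [InnerProductSpace ℂ ℍ] [CompleteSpace ℍ]
    (DH DA : Set ℍ) (H A : ℍ → ℍ) (U : ℝ → ℍ →L[ℂ] ℍ)
    (hDH : Dense DH) (hDA : Dense DA)
    (hHsym : ∀ φ ∈ DH, ∀ ψ ∈ DH, ⟪H φ, ψ⟫ = ⟪φ, H ψ⟫)
    (hAsym : ∀ φ ∈ DA, ∀ ψ ∈ DA, ⟪A φ, ψ⟫ = ⟪φ, A ψ⟫)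
    (hU0 : U 0 = ContinuousLinearMap.id ℂ ℍ)
    (hUgrp : ∀ s t : ℝ, U (s + t) = (U s).comp (U t))
    (hUunitary : ∀ (t : ℝ) (x : ℍ), ‖U t x‖ = ‖x‖)
    (hUDH : ∀ (t : ℝ), ∀ ψ ∈ DH, U t ψ ∈ DH)
    (hgen : ∀ ψ ∈ DH, ∀ t : ℝ,
      HasDerivAt (fun s => U s ψ) (-(Complex.I) • H (U t ψ)) t)
    -- (H2): invariance of `DA ∩ DH` under the propagator
    (hinv : ∀ (t : ℝ), ∀ ψ ∈ DA ∩ DH, U t ψ ∈ DA ∩ DH)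
    -- (H3): uniform boundedness of `‖A e^{-itH} ψ₀‖` on bounded time intervals
    (hbdd : ∀ ψ₀ ∈ DA ∩ DH, ∀ I : Set ℝ, Bornology.IsBounded I →
      ∃ M : ℝ, ∀ t ∈ I, ‖A (U t ψ₀)‖ ≤ M)
    (ψ₀ : ℍ) (hψ₀ : ψ₀ ∈ DA ∩ DH) :
    (∀ t : ℝ, HasDerivAt (fun s => ⟪U s ψ₀, A (U s ψ₀)⟫)
        (Complex.I * (⟪H (U t ψ₀), A (U t ψ₀)⟫ - ⟪A (U t ψ₀), H (U t ψ₀)⟫)) t) ∧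
    Continuous (fun t : ℝ =>
        Complex.I * (⟪H (U t ψ₀), A (U t ψ₀)⟫ - ⟪A (U t ψ₀), H (U t ψ₀)⟫)) :=
  abstract_ehrenfest_general DH DA H A U hDH hDA hAsym hU0 hUgrp hUunitary hgen hinv hbdd ψ₀ hψ₀
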